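/- arXiv:1201.2186 — 2 statements merged into one kernel-verified Lean document; each statement's English description precedes it below -/
import Mathlib

section
/- Freeness of splayed divisors: let $\mathcal{O} = \mathbb{C}[[x_1,\dots,x_n,y_1,\dots,y_m]]$, let $g \in \mathbb{C}[[x_1,\dots,x_n]]$ and $h \in \mathbb{C}[[y_1,\dots,y_m]]$ be reduced. Then $\mathrm{Der}(\log gh)$ is a free $\mathcal{O}$-module if and only if $\mathrm{Der}_{\mathbb{C}[[x]]}(\log g)$ is a free $\mathbb{C}[[x_1,\dots,x_n]]$-module and $\mathrm{Der}_{\mathbb{C}[[y]]}(\log h)$ is a free $\mathbb{C}[[y_1,\dots,y_m]]$-module. -/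
set_option maxHeartbeats 1000000
set_option synthInstance.maxHeartbeats 400000
set_option linter.unusedSectionVars false

open MvPowerSeries Finset

section Core

variable {σ : Type*} [DecidableEq σ]

/-- Formal partial derivative of a multivariate power series with respect to the
variable `i`. -/
noncomputable def pderiv (i : σ) (f : MvPowerSeries σ ℂ) : MvPowerSeries σ ℂ :=
  fun m => ((m i : ℂ) + 1) * MvPowerSeries.coeff (m + Finsupp.single i 1) f

theorem coeff_pderiv (i : σ) (f : MvPowerSeries σ ℂ) (m : σ →₀ ℕ) :
    MvPowerSeries.coeff m (pderiv i f) =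
      ((m i : ℂ) + 1) * MvPowerSeries.coeff (m + Finsupp.single i 1) f := rfl

private lemma pderiv_key (i : σ) (f g : MvPowerSeries σ ℂ) (m : σ →₀ ℕ) :
    (∑ p ∈ (antidiagonal (m + Finsupp.single i 1) : Finset ((σ →₀ ℕ) × (σ →₀ ℕ))),
        (p.2 i : ℂ) * (MvPowerSeries.coeff p.1 f * MvPowerSeries.coeff p.2 g))
      = ∑ q ∈ (antidiagonal m : Finset ((σ →₀ ℕ) × (σ →₀ ℕ))),
          MvPowerSeries.coeff q.1 f * MvPowerSeries.coeff q.2 (pderiv i g) := by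
  classical
  rw [← Finset.sum_filter_of_ne (p := fun p : (σ →₀ ℕ) × (σ →₀ ℕ) => p.2 i ≠ 0)
    (by
      intro p _ hp hzero
      apply hp
      rw [hzero]
      simp)]
  refine Finset.sum_nbij' (fun p => (p.1, p.2 - Finsupp.single i 1))
    (fun q => (q.1, q.2 + Finsupp.single i 1)) ?_ ?_ ?_ ?_ ?_
  · intro p hp
    simp only [Finset.mem_filter, HasAntidiagonal.mem_antidiagonal] at hp
    obtain ⟨hsum, hne⟩ := hp
    rw [HasAntidiagonal.mem_antidiagonal]
    ext j
    have hj := DFunLike.congr_fun hsum j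
    simp only [Finsupp.add_apply, Finsupp.tsub_apply, Finsupp.single_apply] at hj ⊢
    by_cases hji : i = j
    · subst hji
      simp at hj ⊢
      omega
    · simp only [if_neg hji] at hj ⊢
      omega
  · intro q hq
    rw [HasAntidiagonal.mem_antidiagonal] at hq
    simp only [Finset.mem_filter, HasAntidiagonal.mem_antidiagonal]
    constructor
    · rw [← hq]; abel
    · simp [Finsupp.add_apply, Finsupp.single_apply]
  · intro p hp
    simp only [Finset.mem_filter, HasAntidiagonal.mem_antidiagonal] at hp
    obtain ⟨hsum, hne⟩ := hp
    have hle : Finsupp.single i 1 ≤ p.2 := by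
      rw [Finsupp.single_le_iff]; omega
    simp [tsub_add_cancel_of_le hle]
  · intro q _
    simp
  · intro p hp
    simp only [Finset.mem_filter, HasAntidiagonal.mem_antidiagonal] at hp
    obtain ⟨hsum, hne⟩ := hp
    have hle : Finsupp.single i 1 ≤ p.2 := by
      rw [Finsupp.single_le_iff]; omega
    rw [_root_.coeff_pderiv, tsub_add_cancel_of_le hle]
    have h2 : (((p.2 - Finsupp.single i 1 : σ →₀ ℕ) i : ℕ) : ℂ) + 1 = (p.2 i : ℂ) := by
      have hx : (p.2 - Finsupp.single i 1 : σ →₀ ℕ) i = p.2 i - 1 := by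
        simp [Finsupp.tsub_apply]
      rw [hx]
      have h1 : 1 ≤ p.2 i := by omega
      push_cast [h1]
      ring
    rw [h2]
    ring

theorem pderiv_mul (i : σ) (f g : MvPowerSeries σ ℂ) :
    pderiv i (f * g) = f * pderiv i g + g * pderiv i f := by
  classical
  apply MvPowerSeries.ext
  intro m
  have e1 : MvPowerSeries.coeff m (pderiv i (f * g))
      = ∑ p ∈ (antidiagonal (m + Finsupp.single i 1) : Finset ((σ →₀ ℕ) × (σ →₀ ℕ))),
          ((p.1 i : ℂ) * (MvPowerSeries.coeff p.1 f * MvPowerSeries.coeff p.2 g)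
            + (p.2 i : ℂ) * (MvPowerSeries.coeff p.1 f * MvPowerSeries.coeff p.2 g)) := by
    rw [_root_.coeff_pderiv, coeff_mul, Finset.mul_sum]
    refine Finset.sum_congr rfl ?_
    intro p hp
    rw [HasAntidiagonal.mem_antidiagonal] at hp
    have hj := DFunLike.congr_fun hp i
    simp only [Finsupp.add_apply, Finsupp.single_apply, if_pos rfl] at hj
    have hc : (p.1 i : ℂ) + (p.2 i : ℂ) = (m i : ℂ) + 1 := by
      exact_mod_cast congrArg (Nat.cast : ℕ → ℂ) hj
    rw [← hc, add_mul]
  have e3 : (∑ p ∈ (antidiagonal (m + Finsupp.single i 1) : Finset ((σ →₀ ℕ) × (σ →₀ ℕ))),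
      (p.2 i : ℂ) * (MvPowerSeries.coeff p.1 f * MvPowerSeries.coeff p.2 g))
      = MvPowerSeries.coeff m (f * pderiv i g) := by
    rw [coeff_mul]
    exact pderiv_key i f g m
  have e4 : (∑ p ∈ (antidiagonal (m + Finsupp.single i 1) : Finset ((σ →₀ ℕ) × (σ →₀ ℕ))),
      (p.1 i : ℂ) * (MvPowerSeries.coeff p.1 f * MvPowerSeries.coeff p.2 g))
      = MvPowerSeries.coeff m (g * pderiv i f) := by
    rw [coeff_mul, ← pderiv_key i g f m]
    refine Finset.sum_nbij' Prod.swap Prod.swap ?_ ?_ ?_ ?_ ?_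
    · intro p hp
      rw [HasAntidiagonal.mem_antidiagonal] at hp ⊢
      rw [← hp]
      exact add_comm _ _
    · intro p hp
      rw [HasAntidiagonal.mem_antidiagonal] at hp ⊢
      rw [← hp]
      exact add_comm _ _
    · intro p _
      simp
    · intro p _
      simp
    · intro p _
      simp only [Prod.fst_swap, Prod.snd_swap]
      ring
  rw [map_add, e1, Finset.sum_add_distrib, e3, e4]
  ring

theorem pderiv_add (i : σ) (f g : MvPowerSeries σ ℂ) :
    pderiv i (f + g) = pderiv i f + pderiv i g := by
  apply MvPowerSeries.ext
  intro m
  show ((m i : ℂ) + 1) * MvPowerSeries.coeff (m + Finsupp.single i 1) (f + g) = _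
  rw [map_add, map_add]
  show _ = ((m i : ℂ) + 1) * _ + ((m i : ℂ) + 1) * _
  ring

theorem pderiv_smul (i : σ) (c : ℂ) (f : MvPowerSeries σ ℂ) :
    pderiv i (c • f) = c • pderiv i f := by
  apply MvPowerSeries.ext
  intro m
  show ((m i : ℂ) + 1) * MvPowerSeries.coeff (m + Finsupp.single i 1) (c • f) = _
  rw [map_smul]
  show _ = c • (((m i : ℂ) + 1) * MvPowerSeries.coeff (m + Finsupp.single i 1) f)
  simp [smul_eq_mul]
  ring

/-- The formal partial derivative as a `ℂ`-linear derivation. -/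
noncomputable def pderivD (i : σ) : Derivation ℂ (MvPowerSeries σ ℂ) (MvPowerSeries σ ℂ) where
  toFun := pderiv i
  map_add' := pderiv_add i
  map_smul' c f := by simpa using pderiv_smul i c f
  map_one_eq_zero' := by
    apply MvPowerSeries.ext
    intro m
    classical
    show ((m i : ℂ) + 1) * MvPowerSeries.coeff (m + Finsupp.single i 1) 1 = _
    rw [MvPowerSeries.coeff_one]
    have : m + Finsupp.single i 1 ≠ 0 := by
      intro h
      have := DFunLike.congr_fun h i
      simp [Finsupp.add_apply, Finsupp.single_apply] at this
    rw [if_neg this]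
    simp
  leibniz' f g := by
    simpa [smul_eq_mul] using pderiv_mul i f g

/-- The module of logarithmic derivations along the divisor defined by `f`. -/
noncomputable def logDer (f : MvPowerSeries σ ℂ) :
    Submodule (MvPowerSeries σ ℂ) (Derivation ℂ (MvPowerSeries σ ℂ) (MvPowerSeries σ ℂ)) where
  carrier := {δ | δ f ∈ Ideal.span {f}}
  add_mem' := by
    intro a b ha hb
    simpa using Ideal.add_mem _ ha hb
  zero_mem' := by simp
  smul_mem' := by
    intro c δ hδ
    simpa [smul_eq_mul] using Ideal.mul_mem_left _ c hδ

/-- The Jacobian ideal of `f`: the ideal generated by all partial derivatives of `f`. -/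
noncomputable def jacobianIdeal (f : MvPowerSeries σ ℂ) : Ideal (MvPowerSeries σ ℂ) :=
  Ideal.span (Set.range fun i => pderiv i f)

/-- `f` depends only on the variables in `s`. -/
def DependsOnlyOn (s : Set σ) (f : MvPowerSeries σ ℂ) : Prop :=
  ∀ m : σ →₀ ℕ, (∃ i ∉ s, m i ≠ 0) → MvPowerSeries.coeff m f = 0

/-- `g` and `h` have no common irreducible factor. -/
def NoCommonFactor (g h : MvPowerSeries σ ℂ) : Prop :=
  ∀ p : MvPowerSeries σ ℂ, Irreducible p → p ∣ g → ¬ p ∣ h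

end Core

/-!
Writing a derivation in the basis `∂ᵢ` identifies `Der(log f)` with the module of coefficient
vectors `a` such that `f ∣ ∑ aᵢ ∂ᵢf`. For `f = g h` with `g` and `h` in disjoint sets of variables,
`∂f = (h ∂ₓg, g ∂ᵧh)`, and `g h ∣ h A + g B` iff `g ∣ A` and `h ∣ B`: modulo `g`, a nonzero series
in `y` alone is a non-zero-divisor, as its lex-leading coefficient is a nonzero constant. So the
module splits as a direct sum of the corresponding modules of `g` and of `h` over `ℂ[[x,y]]`,
and over a local ring a direct sum of finitely generated modules is free iff both summands are.
Finally, seen in `ℂ[[x]][[y]]`, the module of `g` is the coefficientwise extension `M[[y]]` of its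
`ℂ[[x]]`-counterpart `M`: a basis of `M` is a basis of `M[[y]]`, and conversely the constant terms
of a basis of `M[[y]]` form a basis of `M`.
-/

theorem Derivation.mem_pow_of_mem_pow_succ {R A : Type*} [CommSemiring R] [CommSemiring A]
    [Algebra R A] (D : Derivation R A A) (I : Ideal A) {k : ℕ} {x : A}
    (hx : x ∈ I ^ (k + 1)) : D x ∈ I ^ k := by
  induction k generalizing x with
  | zero => simp
  | succ k ih =>
    rw [pow_succ'] at hx
    refine Submodule.mul_induction_on hx (fun a ha b hb => ?_) (fun a b ha hb => ?_)
    · rw [D.leibniz, smul_eq_mul, smul_eq_mul, pow_succ']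
      exact add_mem (Ideal.mul_mem_mul ha (ih hb)) (Ideal.mul_mem_right _ _ (pow_succ' I k ▸ hb))
    · rw [map_add]; exact add_mem ha hb

section LogSyzygies

variable {A ι : Type*} [CommSemiring A] [Fintype ι]

/-- For `d = ∂g`, the coordinate form `{a | g ∣ ∑ aᵢ ∂ᵢg}` of `Der(log g)`. -/
def logSyzygies (g : A) (d : ι → A) : Submodule A (ι → A) :=
  Submodule.comap (Fintype.linearCombination A d) (Ideal.span {g})

theorem mem_logSyzygies {g : A} {d : ι → A} {a : ι → A} :
    a ∈ logSyzygies g d ↔ g ∣ ∑ i, a i * d i := by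
  rw [logSyzygies, Submodule.mem_comap, Fintype.linearCombination_apply, Ideal.mem_span_singleton]
  rfl

theorem free_logSyzygies_ringEquiv_iff {B : Type*} [CommSemiring B] (e : A ≃+* B) (g : A)
    (d : ι → A) :
    Module.Free B (logSyzygies (e g) (fun i => e (d i))) ↔ Module.Free A (logSyzygies g d) := by
  have := RingHomInvPair.of_ringEquiv e
  have := RingHomInvPair.of_ringEquiv_symm e
  let E : (ι → A) ≃ₛₗ[(e : A →+* B)] (ι → B) :=
    { toFun := fun a i => e (a i)
      invFun := fun a i => e.symm (a i)
      map_add' := fun a b => funext fun i => map_add e _ _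
      map_smul' := fun r a => funext fun i => map_mul e _ _
      left_inv := fun a => funext fun i => e.symm_apply_apply _
      right_inv := fun a => funext fun i => e.apply_symm_apply _ }
  have hmap : (logSyzygies g d).map (E : (ι → A) →ₛₗ[(e : A →+* B)] (ι → B)) =
      logSyzygies (e g) (fun i => e (d i)) := by
    ext a
    rw [Submodule.mem_map_equiv, mem_logSyzygies, mem_logSyzygies, ← map_dvd_iff e, map_sum]
    simp [E]
  exact (Module.Free.iff_of_equiv ((E.submoduleMap _).trans (LinearEquiv.ofEq _ _ hmap))).symm

end LogSyzygies

section Splayed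

variable {B ι κ : Type*} [CommRing B] [Fintype ι] [Fintype κ] {G H : B}

theorem mul_dvd_mul_add_mul_iff (hG : ∀ Y, G ∣ H * Y → G ∣ Y) (hH : ∀ Y, H ∣ G * Y → H ∣ Y)
    {Y Z : B} : G * H ∣ H * Y + G * Z ↔ G ∣ Y ∧ H ∣ Z := by
  refine ⟨fun ⟨c, hc⟩ => ⟨hG Y ⟨H * c - Z, ?_⟩, hH Z ⟨G * c - Y, ?_⟩⟩, fun ⟨⟨Y', hY⟩, ⟨Z', hZ⟩⟩ =>
    ⟨Y' + Z', by rw [hY, hZ]; ring⟩⟩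
  · linear_combination hc
  · linear_combination hc

theorem mem_logSyzygies_mul_iff (hG : ∀ Y, G ∣ H * Y → G ∣ Y) (hH : ∀ Y, H ∣ G * Y → H ∣ Y)
    {dG : ι → B} {dH : κ → B} {a : ι ⊕ κ → B} :
    a ∈ logSyzygies (G * H) (Sum.elim (fun i => H * dG i) (fun j => G * dH j)) ↔
      (fun i => a (.inl i)) ∈ logSyzygies G dG ∧ (fun j => a (.inr j)) ∈ logSyzygies H dH := by
  simp only [mem_logSyzygies, Fintype.sum_sum_type, Sum.elim_inl, Sum.elim_inr]
  rw [← mul_dvd_mul_add_mul_iff hG hH]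
  congr! 1
  simp only [Finset.mul_sum]
  congr 1 <;> exact Finset.sum_congr rfl fun _ _ => by ring

noncomputable def logSyzygiesMulEquiv (hG : ∀ Y, G ∣ H * Y → G ∣ Y) (hH : ∀ Y, H ∣ G * Y → H ∣ Y)
    (dG : ι → B) (dH : κ → B) :
    logSyzygies (G * H) (Sum.elim (fun i => H * dG i) (fun j => G * dH j)) ≃ₗ[B]
      logSyzygies G dG × logSyzygies H dH where
  toFun a := (⟨_, ((mem_logSyzygies_mul_iff hG hH).1 a.2).1⟩,
    ⟨_, ((mem_logSyzygies_mul_iff hG hH).1 a.2).2⟩)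
  invFun p := ⟨Sum.elim p.1.1 p.2.1, (mem_logSyzygies_mul_iff hG hH).2 ⟨p.1.2, p.2.2⟩⟩
  map_add' _ _ := rfl
  map_smul' _ _ := rfl
  left_inv a := Subtype.ext (funext fun s => by cases s <;> rfl)
  right_inv _ := rfl

end Splayed

theorem Module.free_prod_iff_of_isLocalRing {R M N : Type*} [CommRing R] [IsLocalRing R]
    [AddCommGroup M] [Module R M] [AddCommGroup N] [Module R N] [Module.Finite R M]
    [Module.Finite R N] :
    Module.Free R (M × N) ↔ Module.Free R M ∧ Module.Free R N := by
  refine ⟨fun _ => ?_, fun ⟨_, _⟩ => inferInstance⟩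
  have : Module.Projective R M :=
    .of_split (LinearMap.inl R M N) (LinearMap.fst R M N) (LinearMap.ext fun _ => rfl)
  have : Module.Projective R N :=
    .of_split (LinearMap.inr R M N) (LinearMap.snd R M N) (LinearMap.ext fun _ => rfl)
  exact ⟨free_of_flat_of_isLocalRing, free_of_flat_of_isLocalRing⟩

namespace Finsupp

variable {α β : Type*}

theorem sumFinsuppAddEquivProdFinsupp_add_single_inl (mo : α ⊕ β →₀ ℕ) (i : α) :
    sumFinsuppAddEquivProdFinsupp (mo + single (.inl i) 1) =
      sumFinsuppAddEquivProdFinsupp mo + (single i 1, 0) := by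
  rw [map_add]; congr 1; ext <;> simp

theorem sumFinsuppAddEquivProdFinsupp_add_single_inr (mo : α ⊕ β →₀ ℕ) (j : β) :
    sumFinsuppAddEquivProdFinsupp (mo + single (.inr j) 1) =
      sumFinsuppAddEquivProdFinsupp mo + (0, single j 1) := by
  rw [map_add]; congr 1; ext <;> simp

end Finsupp

namespace MvPowerSeries

section MinVarPart

variable {σ R : Type*} [Semiring R] [Fintype σ] [LinearOrder σ]

/-- `X i * minVarPart i f` collects the monomials of `f` whose smallest variable is `i`. -/
noncomputable def minVarPart (i : σ) (f : MvPowerSeries σ R) : MvPowerSeries σ R :=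
  fun ν => if ∀ j < i, ν j = 0 then coeff (ν + Finsupp.single i 1) f else 0

theorem coeff_minVarPart (i : σ) (f : MvPowerSeries σ R) (ν : σ →₀ ℕ) :
    coeff ν (minVarPart i f) =
      if ∀ j < i, ν j = 0 then coeff (ν + Finsupp.single i 1) f else 0 :=
  rfl

theorem coeff_X_mul_minVarPart (i : σ) (f : MvPowerSeries σ R) (μ : σ →₀ ℕ) :
    coeff μ (X i * minVarPart i f) =
      if μ i ≠ 0 ∧ ∀ j < i, μ j = 0 then coeff μ f else 0 := by
  rw [X_def, coeff_monomial_mul, one_mul]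
  by_cases hi : μ i = 0
  · rw [if_neg (by simp [Finsupp.single_le_iff, hi]), if_neg (by simp [hi])]
  · have hle : Finsupp.single i 1 ≤ μ := Finsupp.single_le_iff.2 (Nat.one_le_iff_ne_zero.2 hi)
    have hlow : ∀ j < i, (μ - Finsupp.single i 1 : σ →₀ ℕ) j = μ j := fun j hj => by
      simp [hj.ne']
    rw [if_pos hle, coeff_minVarPart, tsub_add_cancel_of_le hle]
    exact if_congr ⟨fun h => ⟨hi, fun j hj => hlow j hj ▸ h j hj⟩,
      fun h j hj => (hlow j hj).trans (h.2 j hj)⟩ rfl rfl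

theorem eq_sum_X_mul_minVarPart {f : MvPowerSeries σ R} (hf : constantCoeff f = 0) :
    f = ∑ i, X i * minVarPart i f := by
  ext μ
  simp only [map_sum, coeff_X_mul_minVarPart]
  rcases eq_or_ne μ 0 with rfl | hμ
  · simp [hf]
  · have hne : μ.support.Nonempty := Finsupp.support_nonempty_iff.2 hμ
    set i₀ := μ.support.min' hne
    have key : ∀ i, (μ i ≠ 0 ∧ ∀ j < i, μ j = 0) ↔ i = i₀ := fun i => by
      constructor
      · rintro ⟨hi, hlt⟩
        refine le_antisymm (not_lt.1 fun h => ?_)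
          (Finset.min'_le _ _ (Finsupp.mem_support_iff.2 hi))
        exact Finsupp.mem_support_iff.1 (Finset.min'_mem _ hne) (hlt _ h)
      · rintro rfl
        exact ⟨Finsupp.mem_support_iff.1 (Finset.min'_mem _ hne), fun j hj =>
          Finsupp.notMem_support_iff.1 fun hmem => (Finset.min'_le _ _ hmem).not_gt hj⟩
    simp only [key, Finset.sum_ite_eq', Finset.mem_univ, if_true]

theorem le_order_minVarPart {k : ℕ} {f : MvPowerSeries σ R} (hf : (k + 1 : ℕ∞) ≤ f.order)
    (i : σ) : (k : ℕ∞) ≤ (minVarPart i f).order := by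
  refine le_order fun d hd => ?_
  rw [coeff_minVarPart]
  split_ifs
  · refine coeff_of_lt_order (lt_of_lt_of_le ?_ hf)
    simp only [map_add, Finsupp.degree_single, Nat.cast_add, Nat.cast_one]
    exact (ENat.add_lt_add_iff_right ENat.one_ne_top).2 hd
  · rfl

end MinVarPart

section Derivations

variable {σ R : Type*}

theorem le_order_of_mem_pow_span_X [CommSemiring R] {k : ℕ} {f : MvPowerSeries σ R}
    (hf : f ∈ Ideal.span (Set.range X) ^ k) : (k : ℕ∞) ≤ f.order := by
  induction k generalizing f with
  | zero => simp
  | succ k ih =>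
    rw [pow_succ] at hf
    refine Submodule.mul_induction_on hf (fun a ha b hb => ?_) (fun a b ha hb => ?_)
    · have hb1 : (1 : ℕ∞) ≤ b.order := by
        refine Order.one_le_iff_pos.2 <| pos_iff_ne_zero.2 <|
          order_ne_zero_iff_constCoeff_eq_zero.2 ?_
        refine Submodule.span_induction ?_ (map_zero _) (fun _ _ _ _ hx hy => ?_)
          (fun c _ _ hx => ?_) hb
        · rintro _ ⟨i, rfl⟩; exact constantCoeff_X i
        · rw [map_add, hx, hy, add_zero]
        · rw [smul_eq_mul, map_mul, hx, mul_zero]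
      exact le_trans (by push_cast; exact add_le_add (ih ha) hb1) le_order_mul
    · exact le_trans (le_min ha hb) min_order_le_add

theorem mem_pow_span_X_of_le_order [CommSemiring R] [Finite σ] {k : ℕ} {f : MvPowerSeries σ R}
    (hf : (k : ℕ∞) ≤ f.order) : f ∈ Ideal.span (Set.range X) ^ k := by
  cases nonempty_fintype σ
  let : LinearOrder σ := LinearOrder.lift' _ (Fintype.equivFin σ).injective
  induction k generalizing f with
  | zero => simp
  | succ k ih =>
    have hf0 : constantCoeff f = 0 := by
      refine order_ne_zero_iff_constCoeff_eq_zero.1 (pos_iff_ne_zero.1 ?_)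
      exact lt_of_lt_of_le (by exact_mod_cast k.succ_pos) hf
    rw [eq_sum_X_mul_minVarPart hf0, pow_succ']
    exact Ideal.sum_mem _ fun i _ => Ideal.mul_mem_mul (Ideal.subset_span ⟨i, rfl⟩)
      (ih (le_order_minVarPart (by exact_mod_cast hf) i))

variable [CommRing R]

theorem derivation_eq_zero_of_map_X [Finite σ]
    (D : Derivation R (MvPowerSeries σ R) (MvPowerSeries σ R)) (hD : ∀ i, D (X i) = 0) :
    D = 0 := by
  have hpoly : ∀ p : MvPolynomial σ R, D p = 0 := fun p => by
    induction p using MvPolynomial.induction_on with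
    | C a => rw [MvPolynomial.coe_C, c_eq_algebraMap, D.map_algebraMap]
    | add p q hp hq => rw [MvPolynomial.coe_add, map_add, hp, hq, add_zero]
    | mul_X p i hp => rw [MvPolynomial.coe_mul, MvPolynomial.coe_X, D.leibniz, hp, hD, smul_zero,
        smul_zero, add_zero]
  ext f ν
  -- `D` kills the truncation of `f`, and lowers the order of the remainder by at most one
  set k := ν.degree + 1
  have hr : f - truncTotal (k + 1) f ∈ Ideal.span (Set.range X) ^ (k + 1) := by
    refine mem_pow_span_X_of_le_order (le_order fun d hd => ?_)
    rw [map_sub, MvPolynomial.coeff_coe, coeff_truncTotal _ (by exact_mod_cast hd), sub_self]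
  have hDf : D f = D (f - truncTotal (k + 1) f) := by rw [map_sub, hpoly, sub_zero]
  rw [hDf, Derivation.zero_apply, map_zero]
  refine coeff_of_lt_order (lt_of_lt_of_le ?_
    (le_order_of_mem_pow_span_X (D.mem_pow_of_mem_pow_succ _ hr)))
  exact_mod_cast Nat.lt_succ_self _

theorem derivation_ext [Finite σ] {D₁ D₂ : Derivation R (MvPowerSeries σ R) (MvPowerSeries σ R)}
    (h : ∀ i, D₁ (X i) = D₂ (X i)) : D₁ = D₂ :=
  sub_eq_zero.1 (derivation_eq_zero_of_map_X _ fun i => by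
    rw [Derivation.sub_apply, h, sub_self])

variable [Fintype σ] [DecidableEq σ]

theorem sum_smul_pderiv_apply_X (a : σ → MvPowerSeries σ R) (j : σ) :
    (∑ i, a i • pderiv R i) (X j) = a j := by
  rw [← Derivation.coeFnAddMonoidHom_apply, map_sum, Finset.sum_apply]
  simp [pderiv_X, Pi.single_apply]

theorem sum_smul_pderiv_apply (a : σ → MvPowerSeries σ R) (f : MvPowerSeries σ R) :
    (∑ i, a i • pderiv R i) f = ∑ i, a i * pderiv R i f := by
  rw [← Derivation.coeFnAddMonoidHom_apply, map_sum, Finset.sum_apply]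
  rfl

noncomputable def derivationEquivPi :
    Derivation R (MvPowerSeries σ R) (MvPowerSeries σ R) ≃ₗ[MvPowerSeries σ R]
      (σ → MvPowerSeries σ R) where
  toFun D i := D (X i)
  map_add' _ _ := rfl
  map_smul' _ _ := rfl
  invFun a := ∑ i, a i • pderiv R i
  left_inv _ := derivation_ext fun j => sum_smul_pderiv_apply_X _ j
  right_inv a := funext (sum_smul_pderiv_apply_X a)

end Derivations

section Curry

variable {σ α β R : Type*} [Semiring R]

noncomputable def curryEquiv (E : (σ →₀ ℕ) ≃+ (α →₀ ℕ) × (β →₀ ℕ)) :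
    MvPowerSeries σ R ≃+* MvPowerSeries β (MvPowerSeries α R) where
  toFun P := (fun ν μ => coeff (E.symm (μ, ν)) P : MvPowerSeries β (MvPowerSeries α R))
  invFun Q := (fun m => coeff (E m).1 (coeff (E m).2 Q) : MvPowerSeries σ R)
  left_inv P := by
    ext m
    change coeff (E.symm ((E m).1, (E m).2)) P = _
    simp
  right_inv Q := by
    refine MvPowerSeries.ext (R := MvPowerSeries α R) fun ν => MvPowerSeries.ext fun μ => ?_
    change coeff (E (E.symm (μ, ν))).1 (coeff (E (E.symm (μ, ν))).2 Q) = _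
    simp
  map_add' P Q := by
    refine MvPowerSeries.ext (R := MvPowerSeries α R) fun ν => MvPowerSeries.ext fun μ => ?_
    exact map_add (coeff (E.symm (μ, ν))) P Q
  map_mul' P Q := by
    classical
    refine MvPowerSeries.ext (R := MvPowerSeries α R) fun ν => MvPowerSeries.ext fun μ => ?_
    change coeff (E.symm (μ, ν)) (P * Q) = _
    set P' : MvPowerSeries β (MvPowerSeries α R) := fun ν μ => coeff (E.symm (μ, ν)) P
    set Q' : MvPowerSeries β (MvPowerSeries α R) := fun ν μ => coeff (E.symm (μ, ν)) Q
    have hP' : ∀ ν μ, coeff μ (coeff ν P') = coeff (E.symm (μ, ν)) P := fun _ _ => rfl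
    have hQ' : ∀ ν μ, coeff μ (coeff ν Q') = coeff (E.symm (μ, ν)) Q := fun _ _ => rfl
    simp only [coeff_mul, map_sum, hP', hQ']
    rw [Finset.sum_comm, ← Finset.sum_product']
    refine Finset.sum_nbij' (fun p => (((E p.1).1, (E p.2).1), ((E p.1).2, (E p.2).2)))
      (fun r => (E.symm (r.1.1, r.2.1), E.symm (r.1.2, r.2.2))) ?_ ?_ ?_ ?_ ?_
    · intro p hp
      have := congrArg E (Finset.HasAntidiagonal.mem_antidiagonal.1 hp)
      simp only [map_add, AddEquiv.apply_symm_apply, Prod.ext_iff, Prod.fst_add,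
        Prod.snd_add] at this
      simp [Finset.mem_product, Finset.HasAntidiagonal.mem_antidiagonal, this]
    · intro r hr
      simp only [Finset.mem_product, Finset.HasAntidiagonal.mem_antidiagonal] at hr
      rw [Finset.HasAntidiagonal.mem_antidiagonal, ← map_add, Prod.mk_add_mk, hr.1, hr.2]
    · intro p _; simp
    · intro r _; simp
    · intro p _; simp [coeff]

theorem coeff_curryEquiv_symm (E : (σ →₀ ℕ) ≃+ (α →₀ ℕ) × (β →₀ ℕ))
    (Q : MvPowerSeries β (MvPowerSeries α R)) (m : σ →₀ ℕ) :
    coeff m ((curryEquiv E).symm Q) = coeff (E m).1 (coeff (E m).2 Q) :=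
  rfl

theorem coeff_curryEquiv_symm_C [DecidableEq β] (E : (σ →₀ ℕ) ≃+ (α →₀ ℕ) × (β →₀ ℕ))
    (a : MvPowerSeries α R) (m : σ →₀ ℕ) :
    coeff m ((curryEquiv E).symm (C a)) = if (E m).2 = 0 then coeff (E m).1 a else 0 := by
  rw [coeff_curryEquiv_symm, coeff_C]
  split_ifs <;> simp

theorem coeff_curryEquiv_symm_map_C [DecidableEq α] (E : (σ →₀ ℕ) ≃+ (α →₀ ℕ) × (β →₀ ℕ))
    (b : MvPowerSeries β R) (m : σ →₀ ℕ) :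
    coeff m ((curryEquiv E).symm (map C b)) = if (E m).1 = 0 then coeff (E m).2 b else 0 := by
  rw [coeff_curryEquiv_symm, coeff_map, coeff_C]

variable (α β R) in
noncomputable abbrev curryInr : MvPowerSeries (α ⊕ β) R ≃+* MvPowerSeries β (MvPowerSeries α R) :=
  curryEquiv Finsupp.sumFinsuppAddEquivProdFinsupp

variable (α β R) in
noncomputable abbrev curryInl : MvPowerSeries (α ⊕ β) R ≃+* MvPowerSeries α (MvPowerSeries β R) :=
  curryEquiv (Finsupp.sumFinsuppAddEquivProdFinsupp.trans (AddEquiv.prodComm))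

end Curry

theorem C_dvd_iff {κ A : Type*} [CommSemiring A] {a : A} {P : MvPowerSeries κ A} :
    C a ∣ P ↔ ∀ ν, a ∣ coeff ν P := by
  refine ⟨fun ⟨Q, hQ⟩ ν => ⟨coeff ν Q, by rw [hQ, coeff_C_mul]⟩, fun h => ?_⟩
  choose c hc using h
  exact ⟨show MvPowerSeries κ A from c, ext fun ν => by rw [coeff_C_mul]; exact hc ν⟩

section BaseChange

variable {κ A ι : Type*} [CommSemiring A] [Fintype ι] {g : A} {d : ι → A}

theorem mem_logSyzygies_C_iff {b : ι → MvPowerSeries κ A} :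
    b ∈ logSyzygies (C g) (fun i => C (d i)) ↔ ∀ ν, (fun i => coeff ν (b i)) ∈ logSyzygies g d := by
  simp only [mem_logSyzygies, C_dvd_iff, map_sum, coeff_mul_C]

theorem C_comp_mem_logSyzygies_C {a : ι → A} (ha : a ∈ logSyzygies g d) :
    (fun i => C (a i)) ∈ logSyzygies (C g) (fun i => C (d i) : ι → MvPowerSeries κ A) := by
  classical
  refine mem_logSyzygies_C_iff.2 fun ν => ?_
  simp only [coeff_C]
  split_ifs
  · exact ha
  · exact zero_mem _

theorem exists_eq_sum_X_smul_of_mem_logSyzygies_C [Fintype κ] {b : ι → MvPowerSeries κ A}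
    (hb : b ∈ logSyzygies (C g) (fun i => C (d i))) (h0 : ∀ i, constantCoeff (b i) = 0) :
    ∃ z : κ → ι → MvPowerSeries κ A, (∀ t, z t ∈ logSyzygies (C g) (fun i => C (d i))) ∧
      b = ∑ t, (X t : MvPowerSeries κ A) • z t := by
  let : LinearOrder κ := LinearOrder.lift' _ (Fintype.equivFin κ).injective
  refine ⟨fun t i => minVarPart t (b i), fun t => mem_logSyzygies_C_iff.2 fun ν => ?_, ?_⟩
  · simp only [coeff_minVarPart]
    split_ifs
    · exact mem_logSyzygies_C_iff.1 hb _
    · exact zero_mem _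
  · funext i
    simpa only [Finset.sum_apply, Pi.smul_apply, smul_eq_mul] using eq_sum_X_mul_minVarPart (h0 i)

end BaseChange

section BaseChangeFree

variable {κ A ι : Type*} [CommRing A] [Fintype ι] {g : A} {d : ι → A}

theorem free_logSyzygies_C_of_free [IsNoetherianRing A] [Module.Free A (logSyzygies g d)] :
    Module.Free (MvPowerSeries κ A) (logSyzygies (C g : MvPowerSeries κ A) (fun i => C (d i))) := by
  let u := Module.Free.chooseBasis A (logSyzygies g d)
  let Φ := Fintype.linearCombination (MvPowerSeries κ A)
    fun k i => (C ((u k : ι → A) i) : MvPowerSeries κ A)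
  have hcoeff : ∀ c ν,
      (fun i => coeff ν (Φ c i)) = (u.equivFun.symm fun k => coeff ν (c k) : ι → A) :=
    fun c ν => funext fun i => by
      simp [Φ, Fintype.linearCombination_apply, Module.Basis.equivFun_symm_apply, coeff_mul_C]
  have hmem : ∀ c, Φ c ∈ logSyzygies (C g) (fun i => C (d i)) := fun c =>
    mem_logSyzygies_C_iff.2 fun ν => hcoeff c ν ▸ Submodule.coe_mem _
  refine Module.Free.of_equiv <|
    LinearEquiv.ofBijective (Φ.codRestrict _ hmem) ⟨fun c c' h => ?_, fun b => ?_⟩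
  · have hΦ : Φ c = Φ c' := congrArg Subtype.val h
    have h' : ∀ ν, u.equivFun.symm (fun k => coeff ν (c k)) =
        u.equivFun.symm (fun k => coeff ν (c' k)) :=
      fun ν => Subtype.ext (by rw [← hcoeff, ← hcoeff, hΦ])
    funext k
    exact ext fun ν => congrFun (u.equivFun.symm.injective (h' ν)) k
  · let c : _ → MvPowerSeries κ A := fun k ν => u.equivFun ⟨_, mem_logSyzygies_C_iff.1 b.2 ν⟩ k
    refine ⟨c, Subtype.ext (funext fun i => ext fun ν => ?_)⟩
    rw [LinearMap.codRestrict_apply, congrFun (hcoeff c ν) i]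
    change ((u.equivFun.symm (u.equivFun ⟨_, mem_logSyzygies_C_iff.1 b.2 ν⟩) :) : ι → A) i = _
    rw [LinearEquiv.symm_apply_apply]

theorem free_of_free_logSyzygies_C [Fintype κ]
    [Module.Free (MvPowerSeries κ A) (logSyzygies (C g : MvPowerSeries κ A) (fun i => C (d i)))] :
    Module.Free A (logSyzygies g d) := by
  set N := logSyzygies (C g : MvPowerSeries κ A) (fun i => C (d i))
  let w := Module.Free.chooseBasis (MvPowerSeries κ A) N
  let π : N →ₛₗ[constantCoeff (σ := κ) (R := A)] logSyzygies g d :=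
    { toFun := fun b => ⟨fun i => constantCoeff (b.1 i), by
        simpa only [coeff_zero_eq_constantCoeff_apply] using mem_logSyzygies_C_iff.1 b.2 0⟩
      map_add' := fun b b' => Subtype.ext (funext fun i => map_add _ _ _)
      map_smul' := fun r b => Subtype.ext (funext fun i => map_mul _ _ _) }
  have hπC : ∀ a : logSyzygies g d, π ⟨fun i => C (a.1 i), C_comp_mem_logSyzygies_C a.2⟩ = a :=
    fun a => Subtype.ext (funext fun i => constantCoeff_C _)
  refine Module.Free.of_basis (Module.Basis.mk (v := fun k => π (w k)) ?_ ?_)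
  · rw [linearIndependent_iff]
    intro l hl
    -- `W` has zero constant term, so `W ∈ ∑ X t • N` and its coordinates `C (l k)` lie in `(X)`
    let W := Finsupp.linearCombination (MvPowerSeries κ A) w (l.mapRange C (map_zero _))
    have hW : π W = 0 := by
      rw [← hl]
      simp only [W]
      rw [Finsupp.linearCombination_apply, Finsupp.linearCombination_apply,
        Finsupp.sum_mapRange_index (h := fun k r => r • w k) fun _ => zero_smul _ _,
        Finsupp.sum, Finsupp.sum, map_sum]
      simp only [map_smulₛₗ, constantCoeff_C]
    obtain ⟨z, hz, hWz⟩ := exists_eq_sum_X_smul_of_mem_logSyzygies_C W.2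
      fun i => congrArg (fun b : logSyzygies g d => b.1 i) hW
    have hWz' : W = ∑ t, (X t : MvPowerSeries κ A) • (⟨z t, hz t⟩ : N) := by
      ext1; simpa using hWz
    ext k
    have hk := congrArg (fun W => constantCoeff (w.repr W k)) hWz'
    simp only [map_sum, map_smul, Finsupp.coe_finsetSum, Finset.sum_apply, Finsupp.smul_apply,
      smul_eq_mul, map_mul, constantCoeff_X, zero_mul, Finset.sum_const_zero] at hk
    simpa [W] using hk
  · rintro a -
    rw [← hπC a, ← w.linearCombination_repr ⟨_, C_comp_mem_logSyzygies_C a.2⟩,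
      Finsupp.linearCombination_apply, Finsupp.sum, map_sum]
    exact Submodule.sum_mem _ fun k _ => by
      rw [map_smulₛₗ]; exact Submodule.smul_mem _ _ (Submodule.subset_span ⟨k, rfl⟩)

theorem free_logSyzygies_C_iff [IsNoetherianRing A] [Fintype κ] :
    Module.Free (MvPowerSeries κ A) (logSyzygies (C g : MvPowerSeries κ A) (fun i => C (d i))) ↔
      Module.Free A (logSyzygies g d) :=
  ⟨fun _ => free_of_free_logSyzygies_C (κ := κ), fun _ => free_logSyzygies_C_of_free⟩

end BaseChangeFree

variable {κ : Type*}

theorem eq_zero_of_mul_eq_zero_of_isUnit_coeff_lexOrder [LinearOrder κ] [WellFoundedGT κ]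
    {S : Type*} [Semiring S] {φ ψ : MvPowerSeries κ S} {p : κ →₀ ℕ}
    (hp : φ.lexOrder = toLex p) (hu : IsUnit (coeff p φ)) (h : φ * ψ = 0) : ψ = 0 := by
  by_contra hψ
  obtain ⟨q, hq⟩ := exists_finsupp_eq_lexOrder_of_ne_zero hψ
  have := coeff_mul_of_add_lexOrder hp hq
  rw [h, map_zero, eq_comm, hu.mul_right_eq_zero] at this
  exact coeff_ne_zero_of_lexOrder hq.symm this

theorem C_dvd_of_C_dvd_map_mul {K A : Type*} [Field K] [CommRing A] [Algebra K A] [Finite κ]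
    {a : A} {h : MvPowerSeries κ K} (hh : h ≠ 0) {P : MvPowerSeries κ A}
    (hd : C a ∣ map (algebraMap K A) h * P) : C a ∣ P := by
  cases nonempty_fintype κ
  let : LinearOrder κ := LinearOrder.lift' _ (Fintype.equivFin κ).injective
  rcases subsingleton_or_nontrivial (A ⧸ Ideal.span {a}) with hS | hS
  · have ha : IsUnit a := by
      rwa [Ideal.Quotient.subsingleton_iff, Ideal.span_singleton_eq_top] at hS
    exact (ha.map C).dvd
  -- modulo `a`, the image of `h` is a non-zero-divisor: its lex-leading coefficient is a unit
  have hmod : ∀ Q : MvPowerSeries κ A,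
      C a ∣ Q ↔ map (Ideal.Quotient.mk (Ideal.span {a})) Q = 0 := fun Q => by
    simp [C_dvd_iff, MvPowerSeries.ext_iff, coeff_map, Ideal.Quotient.eq_zero_iff_dvd]
  rw [hmod, map_mul, map_map] at hd
  rw [hmod]
  set h' := map ((Ideal.Quotient.mk (Ideal.span {a})).comp (algebraMap K A)) h
  obtain ⟨p, hp⟩ := exists_finsupp_eq_lexOrder_of_ne_zero (φ := h') fun h0 => hh (ext fun ν => by
    simpa [h', coeff_map] using congrArg (coeff ν) h0)
  have hu : IsUnit (coeff p h') := by
    have hp0 := coeff_ne_zero_of_lexOrder hp.symm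
    rw [coeff_map] at hp0 ⊢
    exact (Ne.isUnit fun h0 => hp0 (by rw [h0, map_zero])).map _
  exact eq_zero_of_mul_eq_zero_of_isUnit_coeff_lexOrder hp hu hd

end MvPowerSeries

noncomputable def logDerEquivLogSyzygies {σ : Type*} [Fintype σ] [DecidableEq σ]
    (f : MvPowerSeries σ ℂ) :
    logDer f ≃ₗ[MvPowerSeries σ ℂ] logSyzygies f (fun i => MvPowerSeries.pderiv ℂ i f) :=
  (MvPowerSeries.derivationEquivPi.submoduleMap (logDer f)).trans <| LinearEquiv.ofEq _ _ <| by
    ext a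
    rw [Submodule.mem_map_equiv, mem_logSyzygies, ← Ideal.mem_span_singleton]
    show (∑ i, a i • MvPowerSeries.pderiv ℂ i) f ∈ Ideal.span {f} ↔ _
    rw [MvPowerSeries.sum_smul_pderiv_apply]

section Stmt8

variable {n m : ℕ}

/-- The canonical inclusion `ℂ[[x₁,…,xₙ]] ⊆ ℂ[[x₁,…,xₙ,y₁,…,y_m]]`, described on
coefficients. -/
noncomputable def extX (f : MvPowerSeries (Fin n) ℂ) : MvPowerSeries (Fin n ⊕ Fin m) ℂ :=
  fun mo =>
    if (Finsupp.sumFinsuppEquivProdFinsupp mo).2 = 0 then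
      MvPowerSeries.coeff (Finsupp.sumFinsuppEquivProdFinsupp mo).1 f
    else 0

/-- The canonical inclusion `ℂ[[y₁,…,y_m]] ⊆ ℂ[[x₁,…,xₙ,y₁,…,y_m]]`, described on
coefficients. -/
noncomputable def extY (f : MvPowerSeries (Fin m) ℂ) : MvPowerSeries (Fin n ⊕ Fin m) ℂ :=
  fun mo =>
    if (Finsupp.sumFinsuppEquivProdFinsupp mo).1 = 0 then
      MvPowerSeries.coeff (Finsupp.sumFinsuppEquivProdFinsupp mo).2 f
    else 0

theorem coeff_extX (g : MvPowerSeries (Fin n) ℂ) (mo : Fin n ⊕ Fin m →₀ ℕ) :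
    coeff mo (extX g) = if (Finsupp.sumFinsuppAddEquivProdFinsupp mo).2 = 0 then
      coeff (Finsupp.sumFinsuppAddEquivProdFinsupp mo).1 g else 0 :=
  rfl

theorem coeff_extY (h : MvPowerSeries (Fin m) ℂ) (mo : Fin n ⊕ Fin m →₀ ℕ) :
    coeff mo (extY h) = if (Finsupp.sumFinsuppAddEquivProdFinsupp mo).1 = 0 then
      coeff (Finsupp.sumFinsuppAddEquivProdFinsupp mo).2 h else 0 :=
  rfl

theorem pderiv_inl_extX (g : MvPowerSeries (Fin n) ℂ) (i : Fin n) :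
    pderiv ℂ (.inl i) (extX (m := m) g) = extX (pderiv ℂ i g) := by
  ext mo
  rw [MvPowerSeries.coeff_pderiv, coeff_extX, coeff_extX,
    Finsupp.sumFinsuppAddEquivProdFinsupp_add_single_inl]
  split_ifs <;> simp_all [MvPowerSeries.coeff_pderiv]

theorem pderiv_inr_extX (g : MvPowerSeries (Fin n) ℂ) (j : Fin m) :
    pderiv ℂ (.inr j) (extX (m := m) g) = 0 := by
  ext mo
  rw [MvPowerSeries.coeff_pderiv, coeff_extX, Finsupp.sumFinsuppAddEquivProdFinsupp_add_single_inr]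
  simp

theorem pderiv_inr_extY (h : MvPowerSeries (Fin m) ℂ) (j : Fin m) :
    pderiv ℂ (.inr j) (extY (n := n) h) = extY (pderiv ℂ j h) := by
  ext mo
  rw [MvPowerSeries.coeff_pderiv, coeff_extY, coeff_extY,
    Finsupp.sumFinsuppAddEquivProdFinsupp_add_single_inr]
  split_ifs <;> simp_all [MvPowerSeries.coeff_pderiv]

theorem pderiv_inl_extY (h : MvPowerSeries (Fin m) ℂ) (i : Fin n) :
    pderiv ℂ (.inl i) (extY (n := n) h) = 0 := by
  ext mo
  rw [MvPowerSeries.coeff_pderiv, coeff_extY, Finsupp.sumFinsuppAddEquivProdFinsupp_add_single_inl]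
  simp

theorem pderiv_extX_mul_extY (g : MvPowerSeries (Fin n) ℂ) (h : MvPowerSeries (Fin m) ℂ) :
    (fun s => pderiv ℂ s (extX g * extY h)) =
      Sum.elim (fun i => extY h * extX (pderiv ℂ i g)) (fun j => extX g * extY (pderiv ℂ j h)) := by
  funext s
  cases s with
  | inl i => simp [pderiv_inl_extX, pderiv_inl_extY]
  | inr j => simp [pderiv_inr_extX, pderiv_inr_extY]

theorem extX_eq_curryInr_symm_C (g : MvPowerSeries (Fin n) ℂ) :
    extX (m := m) g = (curryInr (Fin n) (Fin m) ℂ).symm (C g) :=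
  ext fun mo => by rw [coeff_curryEquiv_symm_C]; rfl

theorem extX_eq_curryInl_symm_map (g : MvPowerSeries (Fin n) ℂ) :
    extX (m := m) g = (curryInl (Fin n) (Fin m) ℂ).symm (map (algebraMap ℂ _) g) :=
  ext fun mo => by rw [← c_eq_algebraMap, coeff_curryEquiv_symm_map_C]; rfl

theorem extY_eq_curryInl_symm_C (h : MvPowerSeries (Fin m) ℂ) :
    extY (n := n) h = (curryInl (Fin n) (Fin m) ℂ).symm (C h) :=
  ext fun mo => by rw [coeff_curryEquiv_symm_C]; rfl

theorem extY_eq_curryInr_symm_map (h : MvPowerSeries (Fin m) ℂ) :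
    extY (n := n) h = (curryInr (Fin n) (Fin m) ℂ).symm (map (algebraMap ℂ _) h) :=
  ext fun mo => by rw [← c_eq_algebraMap, coeff_curryEquiv_symm_map_C]; rfl

theorem extX_dvd_of_dvd_extY_mul {g : MvPowerSeries (Fin n) ℂ} {h : MvPowerSeries (Fin m) ℂ}
    (hh : h ≠ 0) {P : MvPowerSeries (Fin n ⊕ Fin m) ℂ} (hd : extX g ∣ extY h * P) :
    extX g ∣ P := by
  set Φ := curryInr (Fin n) (Fin m) ℂ
  rw [extX_eq_curryInr_symm_C, extY_eq_curryInr_symm_map, ← Φ.symm_apply_apply P, ← map_mul,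
    map_dvd_iff] at hd
  rw [extX_eq_curryInr_symm_C, ← Φ.symm_apply_apply P, map_dvd_iff]
  exact C_dvd_of_C_dvd_map_mul hh hd

theorem extY_dvd_of_dvd_extX_mul {g : MvPowerSeries (Fin n) ℂ} {h : MvPowerSeries (Fin m) ℂ}
    (hg : g ≠ 0) {P : MvPowerSeries (Fin n ⊕ Fin m) ℂ} (hd : extY h ∣ extX g * P) :
    extY h ∣ P := by
  set Φ := curryInl (Fin n) (Fin m) ℂ
  rw [extY_eq_curryInl_symm_C, extX_eq_curryInl_symm_map, ← Φ.symm_apply_apply P, ← map_mul,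
    map_dvd_iff] at hd
  rw [extY_eq_curryInl_symm_C, ← Φ.symm_apply_apply P, map_dvd_iff]
  exact C_dvd_of_C_dvd_map_mul hg hd

theorem free_logSyzygies_extX_iff (g : MvPowerSeries (Fin n) ℂ) :
    Module.Free (MvPowerSeries (Fin n ⊕ Fin m) ℂ)
        (logSyzygies (extX g) (fun i => extX (m := m) (pderiv ℂ i g))) ↔
      Module.Free (MvPowerSeries (Fin n) ℂ) (logDer g) := by
  rw [funext fun i => extX_eq_curryInr_symm_C (pderiv ℂ i g), extX_eq_curryInr_symm_C,
    free_logSyzygies_ringEquiv_iff, free_logSyzygies_C_iff]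
  exact (Module.Free.iff_of_equiv (logDerEquivLogSyzygies g)).symm

theorem free_logSyzygies_extY_iff (h : MvPowerSeries (Fin m) ℂ) :
    Module.Free (MvPowerSeries (Fin n ⊕ Fin m) ℂ)
        (logSyzygies (extY h) (fun j => extY (n := n) (pderiv ℂ j h))) ↔
      Module.Free (MvPowerSeries (Fin m) ℂ) (logDer h) := by
  rw [funext fun j => extY_eq_curryInl_symm_C (pderiv ℂ j h), extY_eq_curryInl_symm_C,
    free_logSyzygies_ringEquiv_iff, free_logSyzygies_C_iff]
  exact (Module.Free.iff_of_equiv (logDerEquivLogSyzygies h)).symm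

/-- Freeness of splayed divisors: for reduced `g ∈ ℂ[[x]]` and `h ∈ ℂ[[y]]`, the module
`Der(log gh)` is free over `ℂ[[x,y]]` iff `Der_{ℂ[[x]]}(log g)` is free over `ℂ[[x]]` and
`Der_{ℂ[[y]]}(log h)` is free over `ℂ[[y]]`. -/
theorem free_logDer_mul_iff (g : MvPowerSeries (Fin n) ℂ) (h : MvPowerSeries (Fin m) ℂ)
    (hg : Squarefree g) (hh : Squarefree h) :
    Module.Free (MvPowerSeries (Fin n ⊕ Fin m) ℂ) ↥(logDer (extX g * extY h)) ↔
      Module.Free (MvPowerSeries (Fin n) ℂ) ↥(logDer g)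
        ∧ Module.Free (MvPowerSeries (Fin m) ℂ) ↥(logDer h) := by
  rw [Module.Free.iff_of_equiv (logDerEquivLogSyzygies _), pderiv_extX_mul_extY,
    Module.Free.iff_of_equiv (logSyzygiesMulEquiv (fun _ => extX_dvd_of_dvd_extY_mul hh.ne_zero)
      (fun _ => extY_dvd_of_dvd_extX_mul hg.ne_zero) _ _),
    Module.free_prod_iff_of_isLocalRing, free_logSyzygies_extX_iff, free_logSyzygies_extY_iff]

end Stmt8
end

section
/- Additivity of Hilbert–Samuel polynomials for splayed divisors: let $\mathcal{O} = \mathbb{C}[[x_1,\dots,x_n]]$ with maximal ideal $\mathfrak{m}$, let $1 \le k \le n-1$, and let $g \in \mathbb{C}[[x_1,\dots,x_k]] \subseteq \mathcal{O}$ and $h \in \mathbb{C}[[x_{k+1},\dots,x_n]] \subseteq \mathcal{O}$ be reduced nonunits, both nonzero. Then for all sufficiently large $d$, $\mathrm{length}_{\mathcal{O}}\big(\mathcal{O}/((gh) + \mathfrak{m}^d)\big) + \mathrm{length}_{\mathcal{O}}\big(\mathcal{O}/((g,h) + \mathfrak{m}^d)\big) = \mathrm{length}_{\mathcal{O}}\big(\mathcal{O}/((g)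 + \mathfrak{m}^d)\big) + \mathrm{length}_{\mathcal{O}}\big(\mathcal{O}/((h) + \mathfrak{m}^d)\big)$; that is, the Hilbert–Samuel polynomials satisfy $\chi_{\mathcal{O}/(gh)} + \chi_{\mathcal{O}/(g,h)} = \chi_{\mathcal{O}/(g)} + \chi_{\mathcal{O}/(h)}$. -/
set_option maxHeartbeats 1000000
set_option synthInstance.maxHeartbeats 400000
set_option linter.unusedSectionVars false

open MvPowerSeries Finset

/-- The length of a module: the supremum of the lengths of chains of submodules. -/
noncomputable def moduleLength (R M : Type*) [Ring R] [AddCommGroup M] [Module R M] :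
    WithBot ℕ∞ :=
  Order.krullDim (Submodule R M)

/-- The maximal ideal `(x₁, …, xₙ)` of `ℂ[[x₁,…,xₙ]]`. -/
noncomputable def mxIdeal (n : ℕ) : Ideal (MvPowerSeries (Fin n) ℂ) :=
  Ideal.span (Set.range (MvPowerSeries.X : Fin n → MvPowerSeries (Fin n) ℂ))

/-! Length is additive along `0 → 𝒪/(I ⊓ J) → 𝒪/I × 𝒪/J → 𝒪/(I ⊔ J) → 0`, and `(g, h) + 𝔪ᵈ` is the
sum of `(g) + 𝔪ᵈ` and `(h) + 𝔪ᵈ`, so it suffices to show `((g) + 𝔪ᵈ) ∩ ((h) + 𝔪ᵈ) = (gh) + 𝔪ᵈ`.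
Let `g·a ∈ (h) + 𝔪ᵈ` and `a = hc + t` with `ord t ≥ m`. Comparing lowest forms, `in(g)·tₘ` is a
multiple of `in(h)`; since `in(g)` and `in(h)` involve disjoint sets of variables, the lex-least
monomial of `in(g)` shows that `in(h)` divides `tₘ`, so `c` can be corrected to get `ord t ≥ m + 1`.
Inductively `a ∈ (h) + 𝔪^(d - ord g)`, whence `g·a ∈ (gh) + 𝔪ᵈ`. -/

namespace Submodule

variable {R M : Type*} [Ring R] [AddCommGroup M] [Module R M]

theorem length_quotient_inf_add_length_quotient_sup (p q : Submodule R M) :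
    Module.length R (M ⧸ p ⊓ q) + Module.length R (M ⧸ p ⊔ q) =
      Module.length R (M ⧸ p) + Module.length R (M ⧸ q) := by
  let f : M ⧸ p ⊓ q →ₗ[R] (M ⧸ p) × (M ⧸ q) :=
    (factor (inf_le_left : p ⊓ q ≤ p)).prod (factor inf_le_right)
  let g : (M ⧸ p) × (M ⧸ q) →ₗ[R] M ⧸ p ⊔ q :=
    (factor (le_sup_left : p ≤ p ⊔ q)).comp (LinearMap.fst R _ _) -
      (factor le_sup_right).comp (LinearMap.snd R _ _)
  have hf : Function.Injective f := by
    rw [injective_iff_map_eq_zero]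
    rintro ⟨x⟩ hx
    obtain ⟨hxp, hxq⟩ := Prod.ext_iff.mp hx
    exact (Quotient.mk_eq_zero _).mpr
      ⟨(Quotient.mk_eq_zero p).mp hxp, (Quotient.mk_eq_zero q).mp hxq⟩
  have hg : Function.Surjective g := by
    rintro ⟨x⟩
    exact ⟨(Quotient.mk x, 0), by simp [g]; rfl⟩
  have hfg : Function.Exact f g := by
    rintro ⟨⟨x⟩, ⟨y⟩⟩
    change Quotient.mk (x - y) = (0 : M ⧸ p ⊔ q) ↔ _
    rw [Quotient.mk_eq_zero]
    constructor
    · intro hxy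
      obtain ⟨a, ha, b, hb, hab⟩ := mem_sup.mp hxy
      refine ⟨Quotient.mk (x - a), Prod.ext ?_ ?_⟩
      · exact (Quotient.eq p).mpr (show x - a - x ∈ p by simpa using neg_mem ha)
      · refine (Quotient.eq q).mpr (show x - a - y ∈ q from ?_)
        rwa [sub_right_comm, ← hab, add_sub_cancel_left]
    · rintro ⟨⟨z⟩, hz⟩
      obtain ⟨hzx, hzy⟩ := Prod.ext_iff.mp hz
      have hx : z - x ∈ p := (Quotient.eq p).mp hzx
      have hy : z - y ∈ q := (Quotient.eq q).mp hzy
      rw [show x - y = -(z - x) + (z - y) by abel]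
      exact add_mem (mem_sup_left (neg_mem hx)) (mem_sup_right hy)
  have := Module.length_eq_add_of_exact f g hf hg hfg
  rwa [Module.length_prod, eq_comm] at this

end Submodule

namespace MvPowerSeries

section Order

variable {σ R : Type*} [CommSemiring R]

theorem le_order_of_mem_span_range_X_pow {d : ℕ} {f : MvPowerSeries σ R}
    (hf : f ∈ Ideal.span (Set.range X) ^ d) : (d : ℕ∞) ≤ f.order := by
  induction d generalizing f with
  | zero => simp
  | succ d ih =>
    rw [pow_succ'] at hf
    refine Submodule.mul_induction_on hf (fun a ha b hb => ?_) fun a b ha hb =>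
      (le_min ha hb).trans min_order_le_add
    have ha : 1 ≤ a.order := by
      rw [one_le_order_iff_constCoeff_eq_zero, ← RingHom.mem_ker]
      refine (Ideal.span_le.mpr ?_) ha
      rintro _ ⟨i, rfl⟩
      exact constantCoeff_X i
    calc ((d + 1 : ℕ) : ℕ∞) = 1 + d := by push_cast; ring
      _ ≤ a.order + b.order := add_le_add ha (ih hb)
      _ ≤ (a * b).order := le_order_mul

theorem exists_eq_sum_X_mul [Fintype σ] {d : ℕ} {f : MvPowerSeries σ R}
    (hf : ((d + 1 : ℕ) : ℕ∞) ≤ f.order) :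
    ∃ q : σ → MvPowerSeries σ R, f = ∑ i, X i * q i ∧ ∀ i, (d : ℕ∞) ≤ (q i).order := by
  classical
  let _ : LinearOrder σ := LinearOrder.lift' _ (Fintype.equivFin σ).injective
  -- `x ^ e` is sent to the summand of the least variable dividing it
  let q (i : σ) : MvPowerSeries σ R := fun e =>
    if ∀ j < i, e j = 0 then coeff (e + Finsupp.single i 1) f else 0
  have coeff_q (i : σ) (e : σ →₀ ℕ) :
      coeff e (q i) = if ∀ j < i, e j = 0 then coeff (e + Finsupp.single i 1) f else 0 := rfl
  have coeff_X_mul_q (i : σ) (e : σ →₀ ℕ) :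
      coeff e (X i * q i) = if e i ≠ 0 ∧ ∀ j < i, e j = 0 then coeff e f else 0 := by
    have hsub : ∀ j < i, (e - Finsupp.single i 1 : σ →₀ ℕ) j = e j := fun j hj => by
      simp [Finsupp.single_eq_of_ne hj.ne]
    rw [X, coeff_monomial_mul, one_mul]
    by_cases hei : e i = 0
    · rw [if_neg (by simp [Finsupp.single_le_iff, hei]), if_neg (by simp [hei])]
    · have hle : Finsupp.single i 1 ≤ e := Finsupp.single_le_iff.mpr (by omega)
      rw [if_pos hle, coeff_q, tsub_add_cancel_of_le hle]
      simp +contextual [hsub, hei]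
  refine ⟨q, ext fun e => ?_, fun i => le_order fun e he => ?_⟩
  · simp only [map_sum, coeff_X_mul_q]
    rcases eq_or_ne e 0 with rfl | he
    · have h0 : constantCoeff f = 0 :=
        one_le_order_iff_constCoeff_eq_zero.mp (le_trans (by simp) hf)
      simp [h0]
    obtain ⟨i₀, hi₀, hmin⟩ := e.support.exists_minimal (Finsupp.support_nonempty_iff.mpr he)
    have hi₀' : e i₀ ≠ 0 ∧ ∀ j < i₀, e j = 0 := ⟨Finsupp.mem_support_iff.mp hi₀,
      fun j hj => by_contra fun hej => (hmin (Finsupp.mem_support_iff.mpr hej) hj.le).not_gt hj⟩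
    rw [Fintype.sum_eq_single i₀, if_pos hi₀']
    rintro i hi
    refine if_neg fun ⟨hei, hlt⟩ => ?_
    rcases lt_or_gt_of_ne hi with h | h
    · exact hei (hi₀'.2 i h)
    · exact hi₀'.1 (hlt i₀ h)
  · rw [coeff_q]
    split_ifs
    · refine coeff_of_lt_order (lt_of_lt_of_le ?_ hf)
      rw [map_add, Finsupp.degree_single]
      exact_mod_cast Nat.add_lt_add_right (by exact_mod_cast he) 1
    · rfl

theorem mem_span_range_X_pow_iff [Fintype σ] {d : ℕ} {f : MvPowerSeries σ R} :
    f ∈ Ideal.span (Set.range X) ^ d ↔ (d : ℕ∞) ≤ f.order := by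
  refine ⟨le_order_of_mem_span_range_X_pow, fun hf => ?_⟩
  induction d generalizing f with
  | zero => simp
  | succ d ih =>
    obtain ⟨q, rfl, hq⟩ := exists_eq_sum_X_mul hf
    rw [pow_succ']
    exact Ideal.sum_mem _ fun i _ => Ideal.mul_mem_mul (Ideal.subset_span ⟨i, rfl⟩) (ih (hq i))

end Order

section Homogeneous

variable {σ R : Type*} [CommRing R]

theorem le_order_homogeneousComponent (f : MvPowerSeries σ R) (m : ℕ) :
    (m : ℕ∞) ≤ (homogeneousComponent m f).order :=
  le_order fun e he => by
    rw [coeff_homogeneousComponent, if_neg (by exact_mod_cast he.ne)]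

theorem le_order_sub_homogeneousComponent {f : MvPowerSeries σ R} {m : ℕ}
    (hm : (m : ℕ∞) ≤ f.order) : ((m + 1 : ℕ) : ℕ∞) ≤ (f - homogeneousComponent m f).order :=
  le_order fun e he => by
    rw [map_sub, coeff_homogeneousComponent]
    split_ifs with hem
    · exact sub_self _
    · have he' : e.degree < m + 1 := by exact_mod_cast he
      have : (e.degree : ℕ∞) < m := by exact_mod_cast lt_of_le_of_ne (Nat.lt_succ_iff.mp he') hem
      rw [coeff_of_lt_order (this.trans_le hm), sub_zero]

theorem order_homogeneousComponent_of_order_eq {f : MvPowerSeries σ R} {s : ℕ}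
    (hs : f.order = s) : (homogeneousComponent s f).order = s := by
  obtain ⟨⟨e, he, hes⟩, -⟩ := order_eq_nat.mp hs
  refine order_eq_nat.mpr ⟨⟨e, ?_, hes⟩, fun e' he' => ?_⟩
  · rwa [coeff_homogeneousComponent, if_pos hes]
  · rw [coeff_homogeneousComponent, if_neg he'.ne]

variable [NoZeroDivisors R]

theorem homogeneousComponent_mul_mem_span_singleton {h b : MvPowerSeries σ R} {s d : ℕ}
    (hs : h.order = s) (hd : (d : ℕ∞) ≤ (h * b).order) :
    homogeneousComponent d (h * b) ∈ Ideal.span {homogeneousComponent s h} := by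
  rw [order_mul, hs] at hd
  rcases le_or_gt s d with hsd | hds
  · obtain ⟨q, rfl⟩ := Nat.exists_eq_add_of_le hsd
    have hq : (q : ℕ∞) ≤ b.order := by
      rw [Nat.cast_add] at hd
      exact (ENat.add_le_add_iff_left (ENat.natCast_ne_top s)).mp hd
    rw [homogeneousComponent_mul_of_le_order hs.ge hq]
    exact Ideal.mul_mem_right _ _ (Ideal.mem_span_singleton_self _)
  · rw [homogeneousComponent_of_lt_order_eq_zero (f := h * b)]
    · exact Submodule.zero_mem _
    · rw [order_mul, hs]
      exact (Nat.cast_lt.mpr hds).trans_le le_self_add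

theorem mem_span_singleton_sup_pow_of_mem_span_homogeneousComponent [Fintype σ]
    {h F : MvPowerSeries σ R} {s m : ℕ} (hs : h.order = s)
    (hF : F ∈ Ideal.span {homogeneousComponent s h}) (hm : (m : ℕ∞) ≤ F.order) :
    F ∈ Ideal.span {h} ⊔ Ideal.span (Set.range X) ^ (m + 1) := by
  obtain ⟨W, rfl⟩ := Ideal.mem_span_singleton.mp hF
  rw [order_mul, order_homogeneousComponent_of_order_eq hs] at hm
  rw [show homogeneousComponent s h * W = h * W - (h - homogeneousComponent s h) * W by ring]
  refine Submodule.sub_mem _ (Submodule.mem_sup_left ?_) (Submodule.mem_sup_right ?_)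
  · exact Ideal.mul_mem_right W _ (Ideal.mem_span_singleton_self h)
  rw [mem_span_range_X_pow_iff, order_mul]
  calc ((m + 1 : ℕ) : ℕ∞) ≤ s + W.order + 1 := by push_cast; gcongr
    _ = ((s + 1 : ℕ) : ℕ∞) + W.order := by push_cast; ring
    _ ≤ _ := by gcongr; exact le_order_sub_homogeneousComponent hs.ge

end Homogeneous

section SplitVariables

variable {σ : Type*} {S : Set σ}

theorem DependsOnlyOn.mono {s t : Set σ} {f : MvPowerSeries σ ℂ} (hst : s ⊆ t)
    (hf : DependsOnlyOn s f) : DependsOnlyOn t f :=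
  fun m ⟨i, hi, hm⟩ => hf m ⟨i, fun his => hi (hst his), hm⟩

theorem DependsOnlyOn.mul {f g : MvPowerSeries σ ℂ} (hf : DependsOnlyOn S f)
    (hg : DependsOnlyOn S g) : DependsOnlyOn S (f * g) := by
  classical
  rintro m ⟨i, hi, hm⟩
  rw [coeff_mul]
  refine Finset.sum_eq_zero fun p hp => ?_
  rw [HasAntidiagonal.mem_antidiagonal] at hp
  rcases Nat.eq_zero_or_pos (p.1 i) with h | h
  · rw [hg p.2 ⟨i, hi, by rw [← hp] at hm; simpa [h] using hm⟩, mul_zero]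
  · rw [hf p.1 ⟨i, hi, h.ne'⟩, zero_mul]

theorem DependsOnlyOn.homogeneousComponent {f : MvPowerSeries σ ℂ} (hf : DependsOnlyOn S f)
    (p : ℕ) : DependsOnlyOn S (homogeneousComponent p f) := fun m hm => by
  rw [coeff_homogeneousComponent, hf m hm, ite_self]

theorem coeff_add_mul_of_dependsOnlyOn [DecidableEq σ] {P : MvPowerSeries σ ℂ}
    (hP : DependsOnlyOn S P) (T : MvPowerSeries σ ℂ) {α β : σ →₀ ℕ} (hα : ∀ i ∉ S, α i = 0) (hβ : ∀ i ∈ S, β i = 0) :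
    coeff (α + β) (P * T) = ∑ p ∈ antidiagonal α, coeff p.1 P * coeff (p.2 + β) T := by
  rw [coeff_mul]
  symm
  refine Finset.sum_of_injOn (fun p => (p.1, p.2 + β)) ?_ ?_ ?_ fun _ _ => rfl
  · rintro ⟨u, v⟩ - ⟨u', v'⟩ - h
    simp only [Prod.mk.injEq, add_left_inj] at h
    rw [h.1, h.2]
  · rintro ⟨u, v⟩ h
    simp only [Finset.mem_coe, HasAntidiagonal.mem_antidiagonal] at h ⊢
    rw [← h, add_assoc]
  · rintro ⟨u, v⟩ huv himage
    rw [HasAntidiagonal.mem_antidiagonal] at huv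
    by_cases hu : ∃ i ∉ S, u i ≠ 0
    · rw [hP u hu, zero_mul]
    push Not at hu
    refine absurd ⟨(u, α - u), ?_, ?_⟩ himage
    all_goals
      simp only [Finset.mem_coe, HasAntidiagonal.mem_antidiagonal, Prod.mk.injEq, true_and]
      ext i
      have hi := DFunLike.congr_fun huv i
      simp only [Finsupp.add_apply, Finsupp.tsub_apply] at hi ⊢
      by_cases hiS : i ∈ S
      · have := hβ i hiS
        omega
      · have := hu i hiS
        have := hα i hiS
        omega

open scoped Classical in
/-- The coefficient of `x ^ α` when a series is expanded in the variables `S`, with coefficients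
that are series in the remaining variables. -/
noncomputable def partialCoeff (S : Set σ) (α : σ →₀ ℕ) (f : MvPowerSeries σ ℂ) :
    MvPowerSeries σ ℂ :=
  fun β => if ∀ i ∈ S, β i = 0 then coeff (α + β) f else 0

open scoped Classical in
theorem coeff_partialCoeff (α β : σ →₀ ℕ) (f : MvPowerSeries σ ℂ) :
    coeff β (partialCoeff S α f) = if ∀ i ∈ S, β i = 0 then coeff (α + β) f else 0 :=
  rfl

theorem coeff_partialCoeff_of_forall {α β : σ →₀ ℕ} (f : MvPowerSeries σ ℂ)
    (hβ : ∀ i ∈ S, β i = 0) : coeff β (partialCoeff S α f) = coeff (α + β) f := by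
  rw [coeff_partialCoeff, if_pos hβ]

theorem dependsOnlyOn_compl_partialCoeff (α : σ →₀ ℕ) (f : MvPowerSeries σ ℂ) :
    DependsOnlyOn Sᶜ (partialCoeff S α f) := by
  rintro β ⟨i, hi, hβ⟩
  rw [coeff_partialCoeff, if_neg fun h => hβ (h i (Set.notMem_compl_iff.mp hi))]

theorem partialCoeff_mul_of_dependsOnlyOn_compl {Q : MvPowerSeries σ ℂ}
    (hQ : DependsOnlyOn Sᶜ Q) (F : MvPowerSeries σ ℂ) {α : σ →₀ ℕ} (hα : ∀ i ∉ S, α i = 0) :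
    partialCoeff S α (Q * F) = Q * partialCoeff S α F := by
  classical
  ext β
  by_cases hβ : ∀ i ∈ S, β i = 0
  · rw [coeff_partialCoeff_of_forall _ hβ, add_comm,
      coeff_add_mul_of_dependsOnlyOn hQ F (fun i hi => hβ i (not_not.mp hi)) hα, coeff_mul]
    refine Finset.sum_congr rfl fun p hp => ?_
    rw [HasAntidiagonal.mem_antidiagonal] at hp
    rw [coeff_partialCoeff_of_forall _ fun i hi => ?_, add_comm]
    have := DFunLike.congr_fun hp i
    simp only [Finsupp.add_apply, hβ i hi] at this
    omega
  · push Not at hβ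
    obtain ⟨i, hi, hβi⟩ := hβ
    have hdep := hQ.mul (dependsOnlyOn_compl_partialCoeff (S := S) α F)
    rw [coeff_partialCoeff, if_neg fun h => hβi (h i hi),
      hdep β ⟨i, Set.notMem_compl_iff.mpr hi, hβi⟩]

theorem partialCoeff_mul_of_dependsOnlyOn [DecidableEq σ] {P : MvPowerSeries σ ℂ}
    (hP : DependsOnlyOn S P) (T : MvPowerSeries σ ℂ) {α : σ →₀ ℕ} (hα : ∀ i ∉ S, α i = 0) :
    partialCoeff S α (P * T) = ∑ p ∈ antidiagonal α, coeff p.1 P • partialCoeff S p.2 T := by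
  ext β
  simp only [map_sum, map_smul, coeff_partialCoeff, smul_eq_mul, mul_ite, mul_zero]
  split_ifs with hβ
  · exact coeff_add_mul_of_dependsOnlyOn hP T hα hβ
  · simp

theorem mem_span_singleton_of_forall_partialCoeff_mem {Q F : MvPowerSeries σ ℂ}
    (hQ : DependsOnlyOn Sᶜ Q)
    (hF : ∀ α : σ →₀ ℕ, (∀ i ∉ S, α i = 0) → partialCoeff S α F ∈ Ideal.span {Q}) :
    F ∈ Ideal.span {Q} := by
  classical
  have : ∀ α : σ →₀ ℕ, ∃ w, (∀ i ∉ S, α i = 0) → partialCoeff S α F = Q * w := fun α => by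
    by_cases hα : ∀ i ∉ S, α i = 0
    · obtain ⟨w, hw⟩ := Ideal.mem_span_singleton.mp (hF α hα)
      exact ⟨w, fun _ => hw⟩
    · exact ⟨0, fun h => absurd h hα⟩
  choose w hw using this
  -- reassemble the quotients of the partial coefficients into one series
  let W : MvPowerSeries σ ℂ := fun e => coeff (e.filter (· ∉ S)) (w (e.filter (· ∈ S)))
  refine Ideal.mem_span_singleton.mpr ⟨W, ext fun e => ?_⟩
  set α := e.filter (· ∈ S)
  set β := e.filter (· ∉ S)
  have hα : ∀ i ∉ S, α i = 0 := fun i hi => Finsupp.filter_apply_neg _ _ hi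
  have hβ : ∀ i ∈ S, β i = 0 := fun i hi => Finsupp.filter_apply_neg _ _ (not_not.mpr hi)
  have hW : ∀ γ : σ →₀ ℕ, (∀ i ∈ S, γ i = 0) → coeff (γ + α) W = coeff γ (w α) := by
    intro γ hγ
    have h1 : (γ + α).filter (· ∈ S) = α := by
      ext i
      by_cases hi : i ∈ S <;> simp [hi, hγ, hα, α]
    have h2 : (γ + α).filter (· ∉ S) = γ := by
      ext i
      by_cases hi : i ∈ S <;> simp [hi, hγ, hα]
    change coeff ((γ + α).filter (· ∉ S)) (w ((γ + α).filter (· ∈ S))) = _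
    rw [h1, h2]
  calc coeff e F = coeff β (partialCoeff S α F) := by
        rw [coeff_partialCoeff_of_forall F hβ, Finsupp.filter_add_filter_not]
    _ = ∑ p ∈ antidiagonal β, coeff p.1 Q * coeff (p.2 + α) W := by
        rw [hw α hα, coeff_mul]
        refine Finset.sum_congr rfl fun p hp => ?_
        rw [HasAntidiagonal.mem_antidiagonal] at hp
        rw [hW p.2 fun i hi => ?_]
        have := DFunLike.congr_fun hp i
        simp only [Finsupp.add_apply, hβ i hi] at this
        omega
    _ = coeff e (Q * W) := by
        rw [← coeff_add_mul_of_dependsOnlyOn hQ W (fun i hi => hβ i (not_not.mp hi)) hα,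
          add_comm, Finsupp.filter_add_filter_not]

theorem partialCoeff_mem_span_singleton_of_lex_lt [LinearOrder σ] {P Q T : MvPowerSeries σ ℂ}
    (hP : DependsOnlyOn S P) (hQ : DependsOnlyOn Sᶜ Q) (hPT : P * T ∈ Ideal.span {Q})
    {α₀ : σ →₀ ℕ} (hα₀ : coeff α₀ P ≠ 0) (hα₀min : ∀ u, coeff u P ≠ 0 → ¬toLex u < toLex α₀)
    {α : σ →₀ ℕ} (hα : ∀ i ∉ S, α i = 0)
    (ih : ∀ β : σ →₀ ℕ, toLex β < toLex α → (∀ i ∉ S, β i = 0) →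
      partialCoeff S β T ∈ Ideal.span {Q}) :
    partialCoeff S α T ∈ Ideal.span {Q} := by
  classical
  have hα₀S : ∀ i ∉ S, α₀ i = 0 := fun i hi => by_contra fun h => hα₀ (hP α₀ ⟨i, hi, h⟩)
  have hα₀α : ∀ i ∉ S, (α₀ + α) i = 0 := fun i hi => by simp [hα₀S i hi, hα i hi]
  have key : partialCoeff S (α₀ + α) (P * T) ∈ Ideal.span {Q} := by
    obtain ⟨B, hB⟩ := Ideal.mem_span_singleton.mp hPT
    rw [hB, partialCoeff_mul_of_dependsOnlyOn_compl hQ B hα₀α]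
    exact Ideal.mul_mem_right _ _ (Ideal.mem_span_singleton_self Q)
  have hmem : (α₀, α) ∈ antidiagonal (α₀ + α) := HasAntidiagonal.mem_antidiagonal.mpr rfl
  rw [partialCoeff_mul_of_dependsOnlyOn hP T hα₀α, ← Finset.add_sum_erase _ _ hmem] at key
  -- every other term involves a partial coefficient of `T` at a lex-smaller exponent
  have rest : ∑ p ∈ (antidiagonal (α₀ + α)).erase (α₀, α), coeff p.1 P • partialCoeff S p.2 T
      ∈ Ideal.span {Q} := by
    refine Ideal.sum_mem _ fun p hp => ?_
    obtain ⟨hne, hp⟩ := Finset.mem_erase.mp hp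
    rw [HasAntidiagonal.mem_antidiagonal] at hp
    by_cases hp1 : coeff p.1 P = 0
    · rw [hp1, zero_smul]
      exact Submodule.zero_mem _
    have hlt : toLex α₀ < toLex p.1 := by
      refine lt_of_le_of_ne (not_lt.mp (hα₀min p.1 hp1)) fun h => hne ?_
      have h1 : p.1 = α₀ := (toLex.injective h).symm
      rw [h1] at hp
      exact Prod.ext h1 (add_left_cancel hp)
    have hlt' : toLex p.2 < toLex α := lt_of_not_ge fun hle =>
      (add_lt_add_of_lt_of_le hlt hle).ne (congrArg toLex hp.symm)
    refine Submodule.smul_of_tower_mem _ _ (ih p.2 hlt' fun i hi => ?_)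
    have := DFunLike.congr_fun hp i
    simp only [Finsupp.add_apply, hα₀S i hi, hα i hi] at this
    omega
  have := Submodule.smul_of_tower_mem _ (coeff α₀ P)⁻¹ ((Submodule.add_mem_iff_left _ rest).mp key)
  rwa [smul_smul, inv_mul_cancel₀ hα₀, one_smul] at this

theorem mem_span_singleton_of_mul_mem_span_singleton [Finite σ] {P Q T : MvPowerSeries σ ℂ}
    (hP : DependsOnlyOn S P) (hP0 : P ≠ 0) (hQ : DependsOnlyOn Sᶜ Q)
    (hPT : P * T ∈ Ideal.span {Q}) : T ∈ Ideal.span {Q} := by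
  let _ : LinearOrder σ := LinearOrder.lift' _ (Finite.equivFin σ).injective
  have wf : WellFounded fun u v : σ →₀ ℕ => toLex u < toLex v := InvImage.wf toLex wellFounded_lt
  obtain ⟨α₀, hα₀, hα₀min⟩ := wf.has_min {u | coeff u P ≠ 0} <| by
    by_contra h
    exact hP0 (ext fun u => by rw [map_zero]; exact not_not.mp fun hu => h ⟨u, hu⟩)
  refine mem_span_singleton_of_forall_partialCoeff_mem hQ fun α => ?_
  induction α using wf.induction with
  | _ α ih => exact fun hα => partialCoeff_mem_span_singleton_of_lex_lt hP hQ hPT hα₀ hα₀min hα ih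

end SplitVariables

section Splayed

variable {σ : Type*} [Fintype σ] {S : Set σ} {g h : MvPowerSeries σ ℂ}

local notation "𝔪" => Ideal.span (Set.range (X : σ → MvPowerSeries σ ℂ))

theorem mem_span_singleton_sup_pow_succ (hg : DependsOnlyOn S g) (hh : DependsOnlyOn Sᶜ h)
    {r s m : ℕ} (hr : g.order = r) (hs : h.order = s) {t b : MvPowerSeries σ ℂ}
    (ht : (m : ℕ∞) ≤ t.order) (hgt : g * t - h * b ∈ 𝔪 ^ (r + m + 1)) :
    t ∈ Ideal.span {h} ⊔ 𝔪 ^ (m + 1) := by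
  rw [mem_span_range_X_pow_iff] at hgt
  have htm : t - homogeneousComponent m t ∈ 𝔪 ^ (m + 1) :=
    mem_span_range_X_pow_iff.mpr (le_order_sub_homogeneousComponent ht)
  rw [show t = homogeneousComponent m t + (t - homogeneousComponent m t) by ring]
  refine Submodule.add_mem _ ?_ (Submodule.mem_sup_right htm)
  have hgt' : ((r + m : ℕ) : ℕ∞) ≤ (g * t).order := by
    rw [order_mul, hr]
    push_cast
    gcongr
  have hhb : ((r + m : ℕ) : ℕ∞) ≤ (h * b).order := by
    rw [show h * b = g * t - (g * t - h * b) by ring, sub_eq_add_neg]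
    refine le_trans (le_min hgt' ?_) min_order_le_add
    rw [order_neg]
    exact le_trans (by norm_cast; omega) hgt
  have hlow : homogeneousComponent r g * homogeneousComponent m t =
      homogeneousComponent (r + m) (h * b) := by
    rw [← homogeneousComponent_mul_of_le_order hr.ge ht, ← sub_eq_zero, ← map_sub,
      homogeneousComponent_of_lt_order_eq_zero (lt_of_lt_of_le (by norm_cast; omega) hgt)]
  have hdiv : homogeneousComponent m t ∈ Ideal.span {homogeneousComponent s h} :=
    mem_span_singleton_of_mul_mem_span_singleton (hg.homogeneousComponent r)
      (homogeneousComponent_of_order hr.symm) (hh.homogeneousComponent s)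
      (hlow ▸ homogeneousComponent_mul_mem_span_singleton hs hhb)
  exact mem_span_singleton_sup_pow_of_mem_span_homogeneousComponent hs hdiv
    (le_order_homogeneousComponent t m)

theorem mem_span_singleton_sup_pow_of_mul_mem (hg : DependsOnlyOn S g) (hh : DependsOnlyOn Sᶜ h)
    (hh0 : h ≠ 0) {r : ℕ} (hr : g.order = r) {a : MvPowerSeries σ ℂ} {d : ℕ}
    (had : g * a ∈ Ideal.span {h} ⊔ 𝔪 ^ d) : a ∈ Ideal.span {h} ⊔ 𝔪 ^ (d - r) := by
  obtain ⟨s, hs⟩ := ENat.ne_top_iff_exists.mp (order_eq_top_iff.not.mpr hh0)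
  induction d with
  | zero => simp
  | succ d ih =>
    rcases lt_or_ge d r with hdr | hrd
    · simp [Nat.sub_eq_zero_of_le hdr]
    obtain ⟨m, rfl⟩ := Nat.exists_eq_add_of_le hrd
    have hmono : Ideal.span {h} ⊔ 𝔪 ^ (r + m + 1) ≤ Ideal.span {h} ⊔ 𝔪 ^ (r + m) :=
      sup_le_sup_left (Ideal.pow_le_pow_right (Nat.le_succ _)) _
    have hprev := ih (hmono had)
    rw [Nat.add_sub_cancel_left] at hprev
    obtain ⟨_, hc, t, ht, rfl⟩ := Submodule.mem_sup.mp hprev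
    obtain ⟨c, rfl⟩ := Ideal.mem_span_singleton.mp hc
    have hgt : g * t ∈ Ideal.span {h} ⊔ 𝔪 ^ (r + m + 1) := by
      rw [show g * t = g * (h * c + t) - h * (g * c) by ring]
      exact Submodule.sub_mem _ had
        (Submodule.mem_sup_left (Ideal.mul_mem_right _ _ (Ideal.mem_span_singleton_self h)))
    obtain ⟨_, hb, q, hq, hbq⟩ := Submodule.mem_sup.mp hgt
    obtain ⟨b, rfl⟩ := Ideal.mem_span_singleton.mp hb
    rw [show r + m + 1 - r = m + 1 by omega]
    have hgtb : g * t - h * b ∈ 𝔪 ^ (r + m + 1) := by rwa [← hbq, add_sub_cancel_left]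
    exact Submodule.add_mem _
      (Submodule.mem_sup_left (Ideal.mul_mem_right _ _ (Ideal.mem_span_singleton_self h)))
      (mem_span_singleton_sup_pow_succ hg hh hr hs.symm (mem_span_range_X_pow_iff.mp ht) hgtb)

theorem span_singleton_sup_pow_inf_span_singleton_sup_pow (hg : DependsOnlyOn S g)
    (hh : DependsOnlyOn Sᶜ h) (hg0 : g ≠ 0) (hh0 : h ≠ 0) (d : ℕ) :
    (Ideal.span {g} ⊔ 𝔪 ^ d) ⊓ (Ideal.span {h} ⊔ 𝔪 ^ d) = Ideal.span {g * h} ⊔ 𝔪 ^ d := by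
  refine le_antisymm ?_ (sup_le (le_inf ?_ ?_) (le_inf le_sup_right le_sup_right))
  · rintro f ⟨hfg, hfh⟩
    obtain ⟨r, hr⟩ := ENat.ne_top_iff_exists.mp (order_eq_top_iff.not.mpr hg0)
    obtain ⟨_, ha, p, hp, rfl⟩ := Submodule.mem_sup.mp hfg
    obtain ⟨a, rfl⟩ := Ideal.mem_span_singleton.mp ha
    have hga : g * a ∈ Ideal.span {h} ⊔ 𝔪 ^ d := by
      simpa using Submodule.sub_mem _ hfh (Submodule.mem_sup_right hp)
    obtain ⟨_, hc, t, ht, hct⟩ :=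
      Submodule.mem_sup.mp (mem_span_singleton_sup_pow_of_mul_mem hg hh hh0 hr.symm hga)
    obtain ⟨c, rfl⟩ := Ideal.mem_span_singleton.mp hc
    have hgt : g * t ∈ 𝔪 ^ d := by
      refine Ideal.pow_le_pow_right (by omega : d ≤ r + (d - r)) ?_
      rw [pow_add]
      exact Ideal.mul_mem_mul (mem_span_range_X_pow_iff.mpr hr.le) ht
    rw [← hct, show g * (h * c + t) + p = g * h * c + (g * t + p) by ring]
    exact Submodule.add_mem_sup (Ideal.mul_mem_right _ _ (Ideal.mem_span_singleton_self _))
      (Submodule.add_mem _ hgt hp)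
  · exact le_sup_of_le_left (Ideal.span_singleton_le_span_singleton.mpr (dvd_mul_right g h))
  · exact le_sup_of_le_left (Ideal.span_singleton_le_span_singleton.mpr (dvd_mul_left h g))

end Splayed

end MvPowerSeries

theorem hilbert_samuel_additive_splayed_general {n : ℕ} (k : ℕ)
    (g h : MvPowerSeries (Fin n) ℂ)
    (hgx : DependsOnlyOn {i : Fin n | (i : ℕ) < k} g)
    (hhy : DependsOnlyOn {i : Fin n | k ≤ (i : ℕ)} h)
    (hg0 : g ≠ 0) (hh0 : h ≠ 0) :
    ∃ D : ℕ, ∀ d ≥ D,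
      moduleLength (MvPowerSeries (Fin n) ℂ)
          (MvPowerSeries (Fin n) ℂ ⧸ (Ideal.span {g * h} ⊔ (mxIdeal n) ^ d))
        + moduleLength (MvPowerSeries (Fin n) ℂ)
            (MvPowerSeries (Fin n) ℂ ⧸ (Ideal.span {g, h} ⊔ (mxIdeal n) ^ d))
      = moduleLength (MvPowerSeries (Fin n) ℂ)
          (MvPowerSeries (Fin n) ℂ ⧸ (Ideal.span {g} ⊔ (mxIdeal n) ^ d))
        + moduleLength (MvPowerSeries (Fin n) ℂ)
            (MvPowerSeries (Fin n) ℂ ⧸ (Ideal.span {h} ⊔ (mxIdeal n) ^ d)) := by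
  refine ⟨0, fun d _ => ?_⟩
  have hh : DependsOnlyOn {i : Fin n | (i : ℕ) < k}ᶜ h :=
    hhy.mono fun i (hi : k ≤ (i : ℕ)) => not_lt.mpr hi
  have hsup : Ideal.span {g, h} ⊔ mxIdeal n ^ d =
      (Ideal.span {g} ⊔ mxIdeal n ^ d) ⊔ (Ideal.span {h} ⊔ mxIdeal n ^ d) := by
    rw [Ideal.span_insert, sup_sup_sup_comm, sup_idem]
  rw [hsup, mxIdeal, ← span_singleton_sup_pow_inf_span_singleton_sup_pow hgx hh hg0 hh0 d]
  simp only [moduleLength, ← Module.coe_length]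
  exact_mod_cast Submodule.length_quotient_inf_add_length_quotient_sup _ _

/-- Additivity of the Hilbert–Samuel polynomials for splayed divisors: if `g` depends only on
the first `k` variables and `h` only on the remaining ones (both reduced nonzero nonunits),
then for all large `d` the Hilbert–Samuel functions satisfy
`χ_{𝒪/(gh)} + χ_{𝒪/(g,h)} = χ_{𝒪/(g)} + χ_{𝒪/(h)}`. -/
theorem hilbert_samuel_additive_splayed {n : ℕ} (k : ℕ) (hk1 : 1 ≤ k) (hkn : k ≤ n - 1)
    (g h : MvPowerSeries (Fin n) ℂ)
    (hgx : DependsOnlyOn {i : Fin n | (i : ℕ) < k} g)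
    (hhy : DependsOnlyOn {i : Fin n | k ≤ (i : ℕ)} h)
    (hg : Squarefree g) (hh : Squarefree h)
    (hg0 : g ≠ 0) (hh0 : h ≠ 0) (hgu : ¬ IsUnit g) (hhu : ¬ IsUnit h) :
    ∃ D : ℕ, ∀ d ≥ D,
      moduleLength (MvPowerSeries (Fin n) ℂ)
          (MvPowerSeries (Fin n) ℂ ⧸ (Ideal.span {g * h} ⊔ (mxIdeal n) ^ d))
        + moduleLength (MvPowerSeries (Fin n) ℂ)
            (MvPowerSeries (Fin n) ℂ ⧸ (Ideal.span {g, h} ⊔ (mxIdeal n) ^ d))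
      = moduleLength (MvPowerSeries (Fin n) ℂ)
          (MvPowerSeries (Fin n) ℂ ⧸ (Ideal.span {g} ⊔ (mxIdeal n) ^ d))
        + moduleLength (MvPowerSeries (Fin n) ℂ)
            (MvPowerSeries (Fin n) ℂ ⧸ (Ideal.span {h} ⊔ (mxIdeal n) ^ d)) :=
  hilbert_samuel_additive_splayed_general k g h hgx hhy hg0 hh0
end
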